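/- arXiv:2302.07914 — 2 statements merged into one kernel-verified Lean document; each statement's English description precedes it below -/
import Mathlib

section
/- Let G be a finite connected simple graph that equals a Cartesian (box) product G = G₁ □ ⋯ □ G_r with r ≥ 2 factors, where each G_i is connected, has at least two vertices, and is prime with respect to the box product (i.e., G_i is not isomorphic to a box product of two graphs each having at least two vertices). Then 2^{r−1} · |Aut(G)| divides |Aut(F_2(G))|; in particular |Aut(F_2(G))| ≥ 2^{r−1} · |Aut(G)|. -/
/-- The `k`-token graph of a simple graph `G`: vertices are the `k`-element
subsets of the vertex set, two subsets being adjacent iff their symmetric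
difference is a pair `{a, b}` with `ab` an edge of `G`. -/
def tokenGraph {V : Type*} [DecidableEq V] (G : SimpleGraph V) (k : ℕ) :
    SimpleGraph {A : Finset V // A.card = k} where
  Adj A B := ∃ a b, G.Adj a b ∧ symmDiff A.1 B.1 = {a, b}
  symm := by
    constructor
    rintro A B ⟨a, b, hab, h⟩
    exact ⟨a, b, hab, by rwa [symmDiff_comm]⟩
  loopless := by
    constructor
    rintro A ⟨a, b, hab, h⟩
    rw [symmDiff_self] at h
    exact absurd h.symm (by simp)
/-- The Cartesian (box) product of a family of simple graphs: two tuples are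
adjacent iff they are adjacent in exactly one coordinate and equal in all the
other coordinates. -/
def piBoxProd {ι : Type*} {V : ι → Type*} (G : ∀ i, SimpleGraph (V i)) :
    SimpleGraph (∀ i, V i) where
  Adj x y := ∃ i, (G i).Adj (x i) (y i) ∧ ∀ j, j ≠ i → x j = y j
  symm := by
    constructor
    rintro x y ⟨i, h, hj⟩
    exact ⟨i, h.symm, fun j hji => (hj j hji).symm⟩
  loopless := by
    constructor
    rintro x ⟨i, h, _⟩
    exact h.ne rfl

/-- A graph is prime with respect to the Cartesian (box) product if it is not
isomorphic to a box product of two graphs each having at least two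
vertices. -/
def IsBoxPrime {W : Type u} (G : SimpleGraph W) : Prop :=
  ¬ ∃ (A B : Type u) (H : SimpleGraph A) (K : SimpleGraph B),
      Nontrivial A ∧ Nontrivial B ∧ Nonempty (G ≃g H.boxProd K)

/-!
`Aut G` acts on `F₂(G)` through its action on pairs. Its image normalizes the subgroup `N` of
automorphisms of `F₂(G)` fixing every pair `{x, y}` that is an edge of `G`, and meets `N`
trivially: an automorphism of a connected graph on more than two vertices that fixes every edge
setwise is the identity. Hence `|N| · |Aut G|` divides `|Aut F₂(G)|`.

For `G = G₁ □ ⋯ □ G_r`, every sign vector `s ∈ {±1}^r` gives an automorphism of `F₂(G)` sending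
`{x, y}` to `{signMix s x y, signMix s y x}`, where `signMix s x y` takes the coordinates of `x`
where `s` is `1` and those of `y` elsewhere. It fixes every edge of `G`, since the endpoints of an edge differ in only
one coordinate, and only `s = ±1` act trivially, so `N` contains `2^(r-1)` of them.
-/

theorem card_mul_card_dvd_of_range_le_normalizer {A B : Type*} [Group A] [Finite A] [Group B]
    (f : B →* A) (N : Subgroup A) (hnorm : f.range ≤ Subgroup.normalizer (N : Set A))
    (hdisj : ∀ b, f b ∈ N → b = 1) : Nat.card N * Nat.card B ∣ Nat.card A := by
  set P := Subgroup.normalizer (N : Set A)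
  set N' := N.subgroupOf P
  have : N'.Normal := Subgroup.normal_in_normalizer
  let g : B →* P ⧸ N' := (QuotientGroup.mk' N').comp (f.codRestrict P fun b => hnorm ⟨b, rfl⟩)
  have hg : Function.Injective g := (injective_iff_map_eq_one g).2 fun b hb =>
    hdisj b ((QuotientGroup.eq_one_iff (N := N') _).1 hb)
  have hN' : Nat.card N' = Nat.card N :=
    Nat.card_congr (Subgroup.subgroupOfEquivOfLe Subgroup.le_normalizer).toEquiv
  calc Nat.card N * Nat.card B ∣ Nat.card N' * Nat.card (P ⧸ N') :=
        mul_dvd_mul hN'.symm.dvd (Subgroup.card_dvd_of_injective g hg)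
    _ = Nat.card P := by rw [mul_comm, ← Subgroup.card_eq_card_quotient_mul_card_subgroup]
    _ ∣ Nat.card A := Subgroup.card_subgroup_dvd_card P

theorem Finset.map_symmDiff {α β : Type*} [DecidableEq α] [DecidableEq β] (f : α ↪ β)
    (s t : Finset α) : (symmDiff s t).map f = symmDiff (s.map f) (t.map f) := by
  simp only [Finset.map_eq_image, Finset.image_symmDiff _ _ f.injective]

theorem Finset.exists_eq_pair_of_symmDiff_eq_pair {α : Type*} [DecidableEq α] {A B : Finset α}
    {a b : α} (hA : A.card = 2) (hB : B.card = 2) (h : symmDiff A B = {a, b}) :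
    ∃ c, c ≠ a ∧ c ≠ b ∧ (A = {a, c} ∧ B = {b, c} ∨ A = {b, c} ∧ B = {a, c}) := by
  obtain ⟨x, y, hxy, rfl⟩ := Finset.card_eq_two.1 hA
  obtain ⟨u, v, huv, rfl⟩ := Finset.card_eq_two.1 hB
  have hmem : ∀ w, ((w = x ∨ w = y) ∧ ¬(w = u ∨ w = v) ∨ (w = u ∨ w = v) ∧ ¬(w = x ∨ w = y)) ↔
      (w = a ∨ w = b) := by
    intro w
    simpa [Finset.mem_symmDiff] using congrArg (w ∈ ·) h
  have := hmem x; have := hmem y; have := hmem u; have := hmem v; have := hmem a; have := hmem b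
  grind [Finset.pair_comm]

theorem Finset.symmDiff_pair_pair {α : Type*} [DecidableEq α] {a b c : α} (hab : a ≠ b)
    (hca : c ≠ a) (hcb : c ≠ b) : symmDiff ({a, c} : Finset α) {b, c} = {a, b} := by
  ext w
  simp only [Finset.mem_symmDiff, Finset.mem_insert, Finset.mem_singleton]
  grind

namespace SimpleGraph

variable {W : Type*} {H : SimpleGraph W}

theorem Walk.mem_of_forall_adj_mem {S : Set W} (hS : ∀ a b, a ∈ S → H.Adj a b → b ∈ S)
    {x y : W} (w : H.Walk x y) (hx : x ∈ S) : y ∈ S := by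
  induction w with
  | nil => exact hx
  | cons h _ ih => exact ih (hS _ _ hx h)

theorem Iso.apply_eq_and_apply_eq_of_pair_eq [DecidableEq W] (φ : H ≃g H) {x y : W}
    (hxy : H.Adj x y) (hφ : ({φ x, φ y} : Finset W) = {x, y}) (hx : φ x ≠ x) :
    φ x = y ∧ φ y = x := by
  have hx' : φ x ∈ ({x, y} : Finset W) := hφ ▸ Finset.mem_insert_self _ _
  have hy' : φ y ∈ ({x, y} : Finset W) :=
    hφ ▸ Finset.mem_insert_of_mem (Finset.mem_singleton_self _)
  simp only [Finset.mem_insert, Finset.mem_singleton] at hx' hy'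
  have hne : φ x ≠ φ y := φ.injective.ne hxy.ne
  grind

/-- A vertex `x` moved by `φ` and its image `φ x` are each other's only neighbours, so `{x, φ x}`
would be the whole graph. -/
theorem Connected.eq_one_of_forall_adj_pair_eq [DecidableEq W] (hH : H.Connected)
    (hcard : 2 < Nat.card W) (φ : H ≃g H)
    (hφ : ∀ x y, H.Adj x y → ({φ x, φ y} : Finset W) = {x, y}) : φ = 1 := by
  ext x
  by_contra hx
  replace hx : φ x ≠ x := hx
  have hclosed : ∀ a b, a ∈ ({x, φ x} : Set W) → H.Adj a b → b ∈ ({x, φ x} : Set W) := by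
    rintro a b (rfl | rfl) hab
    · exact Or.inr (φ.apply_eq_and_apply_eq_of_pair_eq hab (hφ _ _ hab) hx).1.symm
    · have hmoved : φ (φ x) ≠ φ x := φ.injective.ne hx
      exact Or.inl (φ.injective (φ.apply_eq_and_apply_eq_of_pair_eq hab (hφ _ _ hab) hmoved).2)
  have huniv : ({x, φ x} : Set W) = Set.univ :=
    Set.eq_univ_of_forall fun v =>
      (hH.preconnected x v).some.mem_of_forall_adj_mem hclosed (.inl rfl)
  have := Set.ncard_pair (Ne.symm hx)
  rw [huniv, Set.ncard_univ] at this
  omega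

end SimpleGraph

open scoped Pointwise

section TokenGraph

variable {W W' : Type*} [DecidableEq W] [DecidableEq W'] {H : SimpleGraph W} {H' : SimpleGraph W'}

theorem tokenGraph_two_adj_iff {A B : {A : Finset W // A.card = 2}} :
    (tokenGraph H 2).Adj A B ↔
      ∃ a b c, H.Adj a b ∧ c ≠ a ∧ c ≠ b ∧ A.1 = {a, c} ∧ B.1 = {b, c} := by
  constructor
  · rintro ⟨a, b, hab, h⟩
    obtain ⟨c, hca, hcb, ⟨hA, hB⟩ | ⟨hA, hB⟩⟩ := Finset.exists_eq_pair_of_symmDiff_eq_pair A.2 B.2 h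
    · exact ⟨a, b, c, hab, hca, hcb, hA, hB⟩
    · exact ⟨b, a, c, hab.symm, hcb, hca, hA, hB⟩
  · rintro ⟨a, b, c, hab, hca, hcb, hA, hB⟩
    exact ⟨a, b, hab, by rw [hA, hB, Finset.symmDiff_pair_pair hab.ne hca hcb]⟩

def tokenGraphCongr (e : H ≃g H') (k : ℕ) : tokenGraph H k ≃g tokenGraph H' k where
  toEquiv := e.toEquiv.finsetCongr.subtypeEquiv fun A => by simp
  map_rel_iff' {A B} := by
    simp only [tokenGraph, Equiv.subtypeEquiv_apply, Equiv.finsetCongr_apply,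
      ← Finset.map_symmDiff]
    constructor
    · rintro ⟨a, b, hab, h⟩
      obtain ⟨a, rfl⟩ := e.surjective a
      obtain ⟨b, rfl⟩ := e.surjective b
      refine ⟨a, b, e.map_adj_iff.1 hab, Finset.map_injective e.toEquiv.toEmbedding ?_⟩
      simp [h]
    · rintro ⟨a, b, hab, h⟩
      exact ⟨e a, e b, e.map_adj_iff.2 hab, by simp [h]⟩

@[simp]
theorem tokenGraphCongr_apply_coe (e : H ≃g H') {k : ℕ} (A : {A : Finset W // A.card = k}) :
    (tokenGraphCongr e k A : Finset W') = A.1.map e.toEquiv.toEmbedding := rfl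

variable (H) in
def tokenGraphAutHom (k : ℕ) : (H ≃g H) →* (tokenGraph H k ≃g tokenGraph H k) where
  toFun e := tokenGraphCongr e k
  map_one' := RelIso.ext fun A => Subtype.ext (Finset.map_refl ..)
  map_mul' e f := RelIso.ext fun A => Subtype.ext (by simp [Finset.map_map]; rfl)

@[simp]
theorem tokenGraphAutHom_apply (φ : H ≃g H) (k : ℕ) :
    tokenGraphAutHom H k φ = tokenGraphCongr φ k := rfl

variable (H) in
def edgeTokens : Set {A : Finset W // A.card = 2} := {A | ∃ x y, H.Adj x y ∧ A.1 = {x, y}}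

theorem tokenGraphAutHom_smul_edgeTokens_subset (φ : H ≃g H) :
    tokenGraphAutHom H 2 φ • edgeTokens H ⊆ edgeTokens H := by
  rintro _ ⟨A, ⟨x, y, hxy, hA⟩, rfl⟩
  exact ⟨φ x, φ y, φ.map_adj_iff.2 hxy, by simp [hA]⟩

theorem tokenGraphAutHom_smul_edgeTokens (φ : H ≃g H) :
    tokenGraphAutHom H 2 φ • edgeTokens H = edgeTokens H := by
  refine (tokenGraphAutHom_smul_edgeTokens_subset φ).antisymm ?_
  rw [Set.subset_smul_set_iff, ← map_inv]
  exact tokenGraphAutHom_smul_edgeTokens_subset φ⁻¹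

theorem tokenGraphAutHom_range_le_normalizer :
    (tokenGraphAutHom H 2).range ≤
      Subgroup.normalizer
        (fixingSubgroup (tokenGraph H 2 ≃g tokenGraph H 2) (edgeTokens H) : Set _) := by
  rintro _ ⟨φ, rfl⟩
  exact Subgroup.mem_normalizer_iff_map_conj_eq.2
    (SubMulAction.fixingSubgroup_map_conj_eq (tokenGraphAutHom_smul_edgeTokens φ))

theorem SimpleGraph.Connected.eq_one_of_tokenGraphAutHom_mem_fixingSubgroup (hH : H.Connected)
    (hcard : 2 < Nat.card W) {φ : H ≃g H}
    (hφ : tokenGraphAutHom H 2 φ ∈ fixingSubgroup _ (edgeTokens H)) : φ = 1 := by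
  refine hH.eq_one_of_forall_adj_pair_eq hcard φ fun x y hxy => ?_
  have hfix := (mem_fixingSubgroup_iff _).1 hφ ⟨{x, y}, Finset.card_pair hxy.ne⟩ ⟨x, y, hxy, rfl⟩
  simpa using congrArg Subtype.val hfix

end TokenGraph

namespace Pi

variable {ι : Type*} {V : ι → Type*}

def signMix (s : ι → ℤˣ) (x y : ∀ i, V i) : ∀ i, V i := fun i => if s i = 1 then x i else y i

theorem signMix_apply (s : ι → ℤˣ) (x y : ∀ i, V i) (i : ι) :
    signMix s x y i = if s i = 1 then x i else y i := rfl

@[simp]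
theorem signMix_one (x y : ∀ i, V i) : signMix 1 x y = x := by
  funext i; simp [signMix_apply]

theorem signMix_neg (s : ι → ℤˣ) (x y : ∀ i, V i) : signMix (-s) x y = signMix s y x := by
  funext i
  rcases Int.units_eq_one_or (s i) with h | h <;> simp [signMix_apply, h]

theorem signMix_signMix (s t : ι → ℤˣ) (x y : ∀ i, V i) :
    signMix s (signMix t x y) (signMix t y x) = signMix (s * t) x y := by
  funext i
  rcases Int.units_eq_one_or (s i) with hs | hs <;>
    rcases Int.units_eq_one_or (t i) with ht | ht <;> simp [signMix_apply, hs, ht]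

theorem signMix_ne_signMix (s : ι → ℤˣ) {x y : ∀ i, V i} (h : x ≠ y) :
    signMix s x y ≠ signMix s y x := by
  obtain ⟨i, hi⟩ := Function.ne_iff.1 h
  refine Function.ne_iff.2 ⟨i, ?_⟩
  rcases Int.units_eq_one_or (s i) with hs | hs <;> simp [signMix_apply, hs, hi, Ne.symm hi]

theorem signMix_of_forall_ne_eq (s : ι → ℤˣ) {x y : ∀ i, V i} {i : ι}
    (h : ∀ j, j ≠ i → x j = y j) : signMix s x y = if s i = 1 then x else y := by
  funext j
  by_cases hj : j = i
  · subst hj; split_ifs <;> simp [signMix_apply, *]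
  · split_ifs <;> simp [signMix_apply, h j hj]

theorem signMix_eq_signMix_of_forall_ne_eq {s : ι → ℤˣ} {a b : ∀ i, V i} (c : ∀ i, V i) {i : ι}
    (hoff : ∀ j, j ≠ i → a j = b j) (hs : s i = 1) : signMix s c a = signMix s c b := by
  funext j
  by_cases hj : j = i
  · subst hj; simp [signMix_apply, hs]
  · simp [signMix_apply, hoff j hj]

variable [DecidableEq (∀ i, V i)]

def pairSignMix (s : ι → ℤˣ) (A : Finset (∀ i, V i)) : Finset (∀ i, V i) :=
  A.offDiag.image fun z => signMix s z.1 z.2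

theorem pairSignMix_pair (s : ι → ℤˣ) {x y : ∀ i, V i} (h : x ≠ y) :
    pairSignMix s {x, y} = {signMix s x y, signMix s y x} := by
  simp [pairSignMix, Finset.offDiag_insert, h]

theorem card_pairSignMix (s : ι → ℤˣ) {A : Finset (∀ i, V i)} (hA : A.card = 2) :
    (pairSignMix s A).card = 2 := by
  obtain ⟨x, y, hxy, rfl⟩ := Finset.card_eq_two.1 hA
  rw [pairSignMix_pair s hxy, Finset.card_pair (signMix_ne_signMix s hxy)]

theorem pairSignMix_pairSignMix (s t : ι → ℤˣ) {A : Finset (∀ i, V i)} (hA : A.card = 2) :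
    pairSignMix s (pairSignMix t A) = pairSignMix (s * t) A := by
  obtain ⟨x, y, hxy, rfl⟩ := Finset.card_eq_two.1 hA
  rw [pairSignMix_pair t hxy, pairSignMix_pair s (signMix_ne_signMix t hxy),
    pairSignMix_pair _ hxy, signMix_signMix, signMix_signMix]

theorem pairSignMix_one {A : Finset (∀ i, V i)} (hA : A.card = 2) : pairSignMix 1 A = A := by
  obtain ⟨x, y, hxy, rfl⟩ := Finset.card_eq_two.1 hA
  rw [pairSignMix_pair 1 hxy, signMix_one, signMix_one]

theorem pairSignMix_pairSignMix_self (s : ι → ℤˣ) {A : Finset (∀ i, V i)} (hA : A.card = 2) :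
    pairSignMix s (pairSignMix s A) = A := by
  rw [pairSignMix_pairSignMix s s hA, show s * s = 1 from funext fun i => Int.units_mul_self _,
    pairSignMix_one hA]

theorem eq_one_or_eq_neg_one_of_forall_pairSignMix_eq [∀ i, Nontrivial (V i)] {s : ι → ℤˣ}
    (h : ∀ A : Finset (∀ i, V i), A.card = 2 → pairSignMix s A = A) : s = 1 ∨ s = -1 := by
  by_contra! hs
  obtain ⟨i, hi⟩ := Function.ne_iff.1 hs.1
  obtain ⟨j, hj⟩ := Function.ne_iff.1 hs.2
  replace hi : s i = -1 := (Int.units_eq_one_or _).resolve_left hi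
  replace hj : s j = 1 := (Int.units_eq_one_or _).resolve_right hj
  choose x y hxy using fun k => exists_pair_ne (V k)
  have hne : x ≠ y := fun h => hxy i (congrFun h i)
  have hmem : signMix s x y ∈ ({x, y} : Finset (∀ i, V i)) := by
    rw [← h _ (Finset.card_pair hne), pairSignMix_pair s hne]
    exact Finset.mem_insert_self _ _
  rcases Finset.mem_insert.1 hmem with hx | hy
  · exact hxy i (by simpa [signMix_apply, hi] using (congrFun hx i).symm)
  · exact hxy j (by simpa [signMix_apply, hj] using congrFun (Finset.mem_singleton.1 hy) j)

end Pi

open Pi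

section BoxProd

variable {ι : Type*} {V : ι → Type*} (G : ∀ i, SimpleGraph (V i))

theorem piBoxProd_adj_signMix {s : ι → ℤˣ} {a b : ∀ i, V i} (c : ∀ i, V i) {i : ι}
    (hi : (G i).Adj (a i) (b i)) (hoff : ∀ j, j ≠ i → a j = b j) (hs : s i = 1) :
    (piBoxProd G).Adj (signMix s a c) (signMix s b c) :=
  ⟨i, by simpa [signMix_apply, hs] using hi, fun j hj => by simp [signMix_apply, hoff j hj]⟩

variable [DecidableEq (∀ i, V i)]

theorem tokenGraph_piBoxProd_adj_pairSignMix (s : ι → ℤˣ)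
    {A B : {A : Finset (∀ i, V i) // A.card = 2}} (h : (tokenGraph (piBoxProd G) 2).Adj A B) :
    (tokenGraph (piBoxProd G) 2).Adj ⟨pairSignMix s A, card_pairSignMix s A.2⟩
      ⟨pairSignMix s B, card_pairSignMix s B.2⟩ := by
  obtain ⟨a, b, c, ⟨i, hi, hoff⟩, hca, hcb, hA, hB⟩ := tokenGraph_two_adj_iff.1 h
  refine tokenGraph_two_adj_iff.2 ?_
  simp only [hA, hB, pairSignMix_pair s hca.symm, pairSignMix_pair s hcb.symm]
  rcases Int.units_eq_one_or (s i) with hs | hs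
  · have heq : signMix s c a = signMix s c b := signMix_eq_signMix_of_forall_ne_eq c hoff hs
    exact ⟨signMix s a c, signMix s b c, signMix s c a, piBoxProd_adj_signMix G c hi hoff hs,
      signMix_ne_signMix s hca, heq ▸ signMix_ne_signMix s hcb, rfl, by rw [heq]⟩
  · have hs' : (-s) i = 1 := by simp [hs]
    have heq : signMix s a c = signMix s b c := by
      simpa only [signMix_neg] using signMix_eq_signMix_of_forall_ne_eq c hoff hs'
    refine ⟨signMix s c a, signMix s c b, signMix s a c, ?_, (signMix_ne_signMix s hca).symm, ?_,
      Finset.pair_comm _ _, ?_⟩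
    · simpa only [signMix_neg] using piBoxProd_adj_signMix G c hi hoff hs'
    · exact heq ▸ signMix_ne_signMix s hcb.symm
    · rw [heq, Finset.pair_comm]

theorem pairSignMix_of_adj (s : ι → ℤˣ) {x y : ∀ i, V i} (h : (piBoxProd G).Adj x y) :
    pairSignMix s {x, y} = {x, y} := by
  obtain ⟨i, hi, hoff⟩ := h
  have hne : x ≠ y := fun hxy => hi.ne (congrFun hxy i)
  rw [pairSignMix_pair s hne, signMix_of_forall_ne_eq s hoff,
    signMix_of_forall_ne_eq s fun j hj => (hoff j hj).symm]
  split_ifs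
  · rfl
  · exact Finset.pair_comm _ _

def pairSignMixAut (s : ι → ℤˣ) : tokenGraph (piBoxProd G) 2 ≃g tokenGraph (piBoxProd G) 2 where
  toFun A := ⟨pairSignMix s A, card_pairSignMix s A.2⟩
  invFun A := ⟨pairSignMix s A, card_pairSignMix s A.2⟩
  left_inv A := Subtype.ext (pairSignMix_pairSignMix_self s A.2)
  right_inv A := Subtype.ext (pairSignMix_pairSignMix_self s A.2)
  map_rel_iff' {A B} := ⟨fun h => by
    simpa only [Equiv.coe_fn_mk, pairSignMix_pairSignMix_self s A.2,
      pairSignMix_pairSignMix_self s B.2] using tokenGraph_piBoxProd_adj_pairSignMix G s h,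
    tokenGraph_piBoxProd_adj_pairSignMix G s⟩

@[simp]
theorem pairSignMixAut_apply_coe (s : ι → ℤˣ) (A : {A : Finset (∀ i, V i) // A.card = 2}) :
    (pairSignMixAut G s A : Finset (∀ i, V i)) = pairSignMix s A := rfl

def pairSignMixAutHom : (ι → ℤˣ) →* (tokenGraph (piBoxProd G) 2 ≃g tokenGraph (piBoxProd G) 2) where
  toFun := pairSignMixAut G
  map_one' := RelIso.ext fun A => Subtype.ext (pairSignMix_one A.2)
  map_mul' s t := RelIso.ext fun A => Subtype.ext (pairSignMix_pairSignMix s t A.2).symm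

theorem pairSignMixAutHom_range_le_fixingSubgroup :
    (pairSignMixAutHom G).range ≤ fixingSubgroup _ (edgeTokens (piBoxProd G)) := by
  rintro _ ⟨s, rfl⟩
  rw [mem_fixingSubgroup_iff]
  rintro A ⟨x, y, hxy, hA⟩
  exact Subtype.ext (by simp [pairSignMixAutHom, hA, pairSignMix_of_adj G s hxy])

theorem two_pow_dvd_card_range_pairSignMixAutHom [Finite ι] [Nonempty ι] [∀ i, Nontrivial (V i)] :
    2 ^ (Nat.card ι - 1) ∣ Nat.card (pairSignMixAutHom G).range := by
  have hker : (pairSignMixAutHom G).ker ≤ Subgroup.zpowers (-1) := by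
    intro s hs
    rcases eq_one_or_eq_neg_one_of_forall_pairSignMix_eq fun A hA =>
      congrArg Subtype.val (RelIso.ext_iff.1 hs ⟨A, hA⟩) with rfl | rfl
    · exact one_mem _
    · exact Subgroup.mem_zpowers _
  have hord : Nat.card (Subgroup.zpowers (-1 : ι → ℤˣ)) = 2 := by
    rw [Nat.card_zpowers]
    refine orderOf_eq_prime (by simp) fun h => ?_
    simpa using congrFun h (Classical.arbitrary ι)
  have hcard : Nat.card (pairSignMixAutHom G).ker * Nat.card (pairSignMixAutHom G).range =
      2 ^ Nat.card ι := by
    rw [← Subgroup.index_ker, Subgroup.card_mul_index, Nat.card_fun, Nat.card_eq_fintype_card,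
      Fintype.card_units_int]
  have hker2 : Nat.card (pairSignMixAutHom G).ker ∣ 2 := hord.subst (Subgroup.card_dvd_of_le hker)
  refine Nat.dvd_of_mul_dvd_mul_right two_pos ?_
  rw [← pow_succ, Nat.sub_add_cancel Nat.card_pos, ← hcard, mul_comm]
  exact mul_dvd_mul_left _ hker2

end BoxProd

theorem two_lt_card_pi {ι : Type*} [Fintype ι] {V : ι → Type*} [∀ i, Finite (V i)]
    [∀ i, Nontrivial (V i)] (h : 2 ≤ Fintype.card ι) : 2 < Nat.card (∀ i, V i) := by
  rw [Nat.card_pi]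
  calc 2 < 2 ^ 2 := by norm_num
    _ ≤ 2 ^ Fintype.card ι := Nat.pow_le_pow_right two_pos h
    _ ≤ ∏ i, Nat.card (V i) := Finset.pow_card_le_prod _ _ _ fun i _ => Finite.one_lt_card

theorem aut_tokenGraph_boxProd_lower_bound_general (r : ℕ) (hr : 2 ≤ r)
    (V : Fin r → Type u) [∀ i, Fintype (V i)] [∀ i, DecidableEq (V i)]
    (G : ∀ i, SimpleGraph (V i))
    (hGconn : (piBoxProd G).Connected)
    (hnt : ∀ i, Nontrivial (V i)) :
    (2 ^ (r - 1) * Nat.card (piBoxProd G ≃g piBoxProd G) ∣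
      Nat.card (tokenGraph (piBoxProd G) 2 ≃g tokenGraph (piBoxProd G) 2)) ∧
    2 ^ (r - 1) * Nat.card (piBoxProd G ≃g piBoxProd G) ≤
      Nat.card (tokenGraph (piBoxProd G) 2 ≃g tokenGraph (piBoxProd G) 2) := by
  have : Nonempty (Fin r) := ⟨⟨0, by omega⟩⟩
  have : Finite (tokenGraph (piBoxProd G) 2 ≃g tokenGraph (piBoxProd G) 2) := DFunLike.finite _
  set N := fixingSubgroup (tokenGraph (piBoxProd G) 2 ≃g tokenGraph (piBoxProd G) 2)
    (edgeTokens (piBoxProd G))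
  have hdvd : Nat.card N * Nat.card (piBoxProd G ≃g piBoxProd G) ∣
      Nat.card (tokenGraph (piBoxProd G) 2 ≃g tokenGraph (piBoxProd G) 2) :=
    card_mul_card_dvd_of_range_le_normalizer _ N tokenGraphAutHom_range_le_normalizer
      fun φ hφ => hGconn.eq_one_of_tokenGraphAutHom_mem_fixingSubgroup
        (two_lt_card_pi (by simpa using hr)) hφ
  have hN : 2 ^ (r - 1) ∣ Nat.card N := by
    simpa using (two_pow_dvd_card_range_pairSignMixAutHom G).trans
      (Subgroup.card_dvd_of_le (pairSignMixAutHom_range_le_fixingSubgroup G))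
  have hmain := (mul_dvd_mul_right hN _).trans hdvd
  exact ⟨hmain, Nat.le_of_dvd Nat.card_pos hmain⟩

/-- If a finite connected graph G is the box product of r ≥ 2 connected prime
factors, each with at least two vertices, then 2^{r−1}·|Aut(G)| divides
|Aut(F₂(G))|; in particular |Aut(F₂(G))| ≥ 2^{r−1}·|Aut(G)|. -/
theorem aut_tokenGraph_boxProd_lower_bound (r : ℕ) (hr : 2 ≤ r)
    (V : Fin r → Type u) [∀ i, Fintype (V i)] [∀ i, DecidableEq (V i)]
    (G : ∀ i, SimpleGraph (V i))
    (hconn : ∀ i, (G i).Connected) (hGconn : (piBoxProd G).Connected)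
    (hnt : ∀ i, Nontrivial (V i)) (hprime : ∀ i, IsBoxPrime (G i)) :
    (2 ^ (r - 1) * Nat.card (piBoxProd G ≃g piBoxProd G) ∣
      Nat.card (tokenGraph (piBoxProd G) 2 ≃g tokenGraph (piBoxProd G) 2)) ∧
    2 ^ (r - 1) * Nat.card (piBoxProd G ≃g piBoxProd G) ≤
      Nat.card (tokenGraph (piBoxProd G) 2 ≃g tokenGraph (piBoxProd G) 2) :=
  aut_tokenGraph_boxProd_lower_bound_general r hr V G hGconn hnt
end

section
/- Let m, n, k be positive integers with 1 ≤ k ≤ m + n − 1, and let A be a vertex of F_k(K_{m,n}) with |A ∩ X| = i (so |A ∩ Y| = k − i). Then the degree of A in F_k(K_{m,n}) equals i·(n − k + i) + (k − i)·(m − i). -/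
/-- The number of elements of a finite set of vertices of `K_{m,n}`
(on `Fin m ⊕ Fin n`) lying in the left part `X`. -/
def leftCard {m n : ℕ} (A : Finset (Fin m ⊕ Fin n)) : ℕ :=
  (A.filter (fun v => v.isLeft = true)).card

/-- `H_i`: the set of vertices `A` of `F_k(K_{m,n})` with `|A ∩ X| = i`. -/
def levelSet (m n k i : ℕ) :
    Set {A : Finset (Fin m ⊕ Fin n) // A.card = k} :=
  {A | leftCard A.1 = i}

namespace Finset

variable {V : Type*} [DecidableEq V] {s t : Finset V} {x y : V}

lemma sdiff_insert_erase (hx : x ∈ s) (hy : y ∉ s) : s \ insert y (s.erase x) = {x} := by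
  ext z
  by_cases hzx : z = x
  · subst hzx; simp [hx, ne_of_mem_of_not_mem hx hy]
  · simp +contextual [hzx]

lemma insert_erase_sdiff (hy : y ∉ s) : insert y (s.erase x) \ s = {y} := by
  ext z
  by_cases hzy : z = y
  · subst hzy; simp [hy]
  · simp [hzy]

lemma symmDiff_insert_erase (hx : x ∈ s) (hy : y ∉ s) :
    symmDiff s (insert y (s.erase x)) = {x, y} := by
  rw [symmDiff_def, sdiff_insert_erase hx hy, insert_erase_sdiff hy]
  rfl

lemma card_insert_erase (hx : x ∈ s) (hy : y ∉ s) : #(insert y (s.erase x)) = #s := by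
  rw [card_insert_of_notMem fun h ↦ hy (mem_of_mem_erase h), card_erase_add_one hx]

lemma eq_of_insert_erase_eq {x' y' : V} (hx : x ∈ s) (hy : y ∉ s) (hx' : x' ∈ s) (hy' : y' ∉ s)
    (h : insert y (s.erase x) = insert y' (s.erase x')) : x = x' ∧ y = y' := by
  constructor
  · simpa [sdiff_insert_erase hx hy, sdiff_insert_erase hx' hy'] using congrArg (s \ ·) h
  · simpa [insert_erase_sdiff hy, insert_erase_sdiff hy'] using congrArg (· \ s) h

lemma exists_eq_insert_erase_of_symmDiff_eq_pair {a b : V} (hcard : #s = #t) (hab : a ≠ b)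
    (h : symmDiff s t = {a, b}) :
    ∃ x ∈ s, ∃ y ∉ s, (x = a ∧ y = b ∨ x = b ∧ y = a) ∧ t = insert y (s.erase x) := by
  have hsum : #(s \ t) + #(t \ s) = 2 := by
    rw [← card_union_of_disjoint disjoint_sdiff_sdiff, ← sup_eq_union, ← symmDiff_def, h,
      card_pair hab]
  have hsdiff := card_sdiff_comm hcard
  obtain ⟨x, hx⟩ := card_eq_one.mp (show #(s \ t) = 1 by omega)
  obtain ⟨y, hy⟩ := card_eq_one.mp (show #(t \ s) = 1 by omega)
  have hxs : x ∈ s := (mem_sdiff.mp (hx ▸ mem_singleton_self x)).1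
  have hys : y ∉ s := (mem_sdiff.mp (hy ▸ mem_singleton_self y)).2
  have hpair : symmDiff s t = {x, y} := by rw [symmDiff_def, hx, hy]; rfl
  refine ⟨x, hxs, y, hys, ?_, ?_⟩
  · rw [← Set.pair_eq_pair_iff, ← coe_pair, ← coe_pair, ← h, hpair]
  · rw [← symmDiff_insert_erase hxs hys, symmDiff_right_inj] at hpair
    exact hpair

end Finset

open Finset

section TokenGraph

variable {V : Type*} [DecidableEq V] {G : SimpleGraph V} {k : ℕ}

theorem tokenGraph_adj_iff {A B : {A : Finset V // #A = k}} :
    (tokenGraph G k).Adj A B ↔ ∃ x ∈ A.1, ∃ y ∉ A.1, G.Adj x y ∧ B.1 = insert y (A.1.erase x) := by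
  constructor
  · rintro ⟨a, b, hab, h⟩
    obtain ⟨x, hx, y, hy, hxy, hB⟩ :=
      exists_eq_insert_erase_of_symmDiff_eq_pair (A.2.trans B.2.symm) hab.ne h
    rcases hxy with ⟨rfl, rfl⟩ | ⟨rfl, rfl⟩
    exacts [⟨x, hx, y, hy, hab, hB⟩, ⟨x, hx, y, hy, hab.symm, hB⟩]
  · rintro ⟨x, hx, y, hy, hxy, hB⟩
    exact ⟨x, y, hxy, hB ▸ symmDiff_insert_erase hx hy⟩

theorem tokenGraph_neighborSet_ncard [Fintype V] [DecidableRel G.Adj]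
    (A : {A : Finset V // #A = k}) :
    ((tokenGraph G k).neighborSet A).ncard = #{p ∈ A.1 ×ˢ A.1ᶜ | G.Adj p.1 p.2} := by
  rw [← Set.ncard_coe_finset, coe_filter]
  simp only [mem_product, mem_compl]
  symm
  refine Set.ncard_congr (fun p hp ↦ ⟨insert p.2 (A.1.erase p.1), ?_⟩) ?_ ?_ ?_
  · rw [card_insert_erase hp.1.1 hp.1.2, A.2]
  · rintro p ⟨⟨hx, hy⟩, hxy⟩
    exact tokenGraph_adj_iff.mpr ⟨p.1, hx, p.2, hy, hxy, rfl⟩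
  · intro p q hp hq h
    obtain ⟨h₁, h₂⟩ := eq_of_insert_erase_eq hp.1.1 hp.1.2 hq.1.1 hq.1.2 (congrArg Subtype.val h)
    exact Prod.ext h₁ h₂
  · rintro B hB
    obtain ⟨x, hx, y, hy, hxy, hB⟩ := tokenGraph_adj_iff.mp hB
    exact ⟨(x, y), ⟨⟨hx, hy⟩, hxy⟩, Subtype.ext hB.symm⟩

end TokenGraph

instance completeBipartiteGraph.instDecidableRelAdj (α β : Type*) :
    DecidableRel (completeBipartiteGraph α β).Adj :=
  fun v w ↦ inferInstanceAs (Decidable (v.isLeft ∧ w.isRight ∨ v.isRight ∧ w.isLeft))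

section CompleteBipartite

variable {α β : Type*} [Fintype α] [Fintype β] [DecidableEq α] [DecidableEq β]

lemma Finset.toLeft_compl (A : Finset (α ⊕ β)) : Aᶜ.toLeft = A.toLeftᶜ := by
  ext; simp

lemma Finset.toRight_compl (A : Finset (α ⊕ β)) : Aᶜ.toRight = A.toRightᶜ := by
  ext; simp

theorem card_edges_leaving_completeBipartiteGraph (A : Finset (α ⊕ β)) :
    #{p ∈ A ×ˢ Aᶜ | (completeBipartiteGraph α β).Adj p.1 p.2} =
      #A.toLeft * (Fintype.card β - #A.toRight) + #A.toRight * (Fintype.card α - #A.toLeft) := by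
  have hsplit : {p ∈ A ×ˢ Aᶜ | (completeBipartiteGraph α β).Adj p.1 p.2} =
      (A.toLeft ×ˢ Aᶜ.toRight).map (.prodMap .inl .inr) ∪
        (A.toRight ×ˢ Aᶜ.toLeft).map (.prodMap .inr .inl) := by
    ext ⟨u | u, v | v⟩ <;> simp
  have hdisj : Disjoint ((A.toLeft ×ˢ Aᶜ.toRight).map (.prodMap .inl .inr))
      ((A.toRight ×ˢ Aᶜ.toLeft).map (.prodMap .inr .inl : β × α ↪ (α ⊕ β) × (α ⊕ β))) := by
    simp [disjoint_left]
  rw [hsplit, card_union_of_disjoint hdisj, card_map, card_map, card_product, card_product,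
    toLeft_compl, toRight_compl, card_compl, card_compl]

end CompleteBipartite

lemma leftCard_eq_card_toLeft {m n : ℕ} (A : Finset (Fin m ⊕ Fin n)) :
    leftCard A = #A.toLeft := by
  rw [leftCard, ← card_map (.inl : Fin m ↪ Fin m ⊕ Fin n)]
  congr 1
  ext (u | u) <;> simp

theorem tokenGraph_Kmn_degree_general (m n k : ℕ)
    (A : {A : Finset (Fin m ⊕ Fin n) // A.card = k}) (i : ℕ)
    (hA : leftCard A.1 = i) :
    ((tokenGraph (completeBipartiteGraph (Fin m) (Fin n)) k).neighborSet
        A).ncard = i * (n - (k - i)) + (k - i) * (m - i) := by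
  have hleft : #A.1.toLeft = i := (leftCard_eq_card_toLeft A.1).symm.trans hA
  have hright : #A.1.toRight = k - i := by
    have := card_toLeft_add_card_toRight (u := A.1)
    omega
  rw [tokenGraph_neighborSet_ncard, card_edges_leaving_completeBipartiteGraph, hleft, hright,
    Fintype.card_fin, Fintype.card_fin]

/-- A vertex A of F_k(K_{m,n}) with |A ∩ X| = i (and so |A ∩ Y| = k − i) has
degree i·(n − (k − i)) + (k − i)·(m − i). -/
theorem tokenGraph_Kmn_degree (m n k : ℕ) (hm : 1 ≤ m) (hn : 1 ≤ n)
    (hk1 : 1 ≤ k) (hk2 : k ≤ m + n - 1)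
    (A : {A : Finset (Fin m ⊕ Fin n) // A.card = k}) (i : ℕ)
    (hA : leftCard A.1 = i) :
    ((tokenGraph (completeBipartiteGraph (Fin m) (Fin n)) k).neighborSet
        A).ncard = i * (n - (k - i)) + (k - i) * (m - i) :=
  tokenGraph_Kmn_degree_general m n k A i hA
end
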